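/- arXiv:quant-ph/0509100 — 2 statements merged into one kernel-verified Lean document; each statement's English description precedes it below -/
import Mathlib

section
/- If Λ is a CPTP map taking density operators ρ and ρ' both to pure states, then ‖Λ[ρ] − Λ[ρ']‖_tr ≤ D(ρ,ρ'), where D(ρ,ρ') is the worst-case distinguishability of ρ and ρ'. -/
open Matrix Kronecker BigOperators
open scoped ComplexOrder

/-- Trace distance/norm with factor 1/2: `‖A‖ = ½ tr √(AᴴA)`. -/
noncomputable def trNorm {m : Type*} [Fintype m] [DecidableEq m] (A : Matrix m m ℂ) : ℝ :=
  (1 / 2) * (((Matrix.posSemidef_conjTranspose_mul_self A).1.eigenvectorUnitary.1 *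
      diagonal (((↑) : ℝ → ℂ) ∘ (√·) ∘ (Matrix.posSemidef_conjTranspose_mul_self A).1.eigenvalues) *
      (star (Matrix.posSemidef_conjTranspose_mul_self A).1.eigenvectorUnitary : Matrix m m ℂ)).trace).re

/-- A density operator: positive semidefinite with unit trace. -/
def IsDensity {m : Type*} [Fintype m] (ρ : Matrix m m ℂ) : Prop :=
  ρ.PosSemidef ∧ ρ.trace = 1

/-- A pure state: a density operator that is a (rank-one) projector. -/
def IsPureState {m : Type*} [Fintype m] (ρ : Matrix m m ℂ) : Prop :=
  IsDensity ρ ∧ ρ * ρ = ρ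

/-- Completely positive trace-preserving map, via a Kraus representation. -/
def IsCPTP {m p : Type*} [Fintype m] [DecidableEq m] [Fintype p]
    (Λ : Matrix m m ℂ →ₗ[ℂ] Matrix p p ℂ) : Prop :=
  ∃ (ι : Type) (s : Finset ι) (K : ι → Matrix p m ℂ),
    (∀ ρ, Λ ρ = ∑ i ∈ s, K i * ρ * (K i)ᴴ) ∧ ∑ i ∈ s, (K i)ᴴ * K i = 1

/-- Partial trace over the second (auxiliary) tensor factor. -/
noncomputable def ptraceB {m b : Type*} [Fintype b] (ρ : Matrix (m × b) (m × b) ℂ) :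
    Matrix m m ℂ :=
  Matrix.of fun i j => ∑ k : b, ρ (i, k) (j, k)

/-- The projector `|χ⟩⟨χ|` onto the vector `χ`. -/
noncomputable def pureProj {m : Type*} (χ : m → ℂ) : Matrix m m ℂ :=
  Matrix.vecMulVec χ (star χ)

/-- `χ` lies in the range of `ρ`. -/
def inRange {m : Type*} [Fintype m] (ρ : Matrix m m ℂ) (χ : m → ℂ) : Prop :=
  ∃ v, ρ *ᵥ v = χ

/-- Worst-case distinguishability: infimum of trace distances of pure states
taken from the ranges of `ρ` and `ρ'`. -/
noncomputable def wcd {m : Type*} [Fintype m] [DecidableEq m] (ρ ρ' : Matrix m m ℂ) : ℝ :=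
  sInf { d : ℝ | ∃ χ χ' : m → ℂ, inRange ρ χ ∧ inRange ρ' χ' ∧
    star χ ⬝ᵥ χ = 1 ∧ star χ' ⬝ᵥ χ' = 1 ∧ d = trNorm (pureProj χ - pureProj χ') }

/-!
If `χ = ρ v` is a unit vector in the range of a state `ρ`, then `|χ⟩⟨χ| ≤ c ρ` for some `c ≥ 0`.
Applying the positive map `Λ`, the state `Λ|χ⟩⟨χ|` is dominated by a multiple of the pure state
`Λ ρ`, and a state dominated by a multiple of a pure state equals it. Hence
`Λ ρ - Λ ρ' = Λ (|χ⟩⟨χ| - |χ'⟩⟨χ'|)` for every admissible pair `χ, χ'`, and it remains to see that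
positive trace-preserving maps contract the trace norm: they send the Jordan decomposition
`X = X⁺ - X⁻` to a difference of positive matrices of the same total trace.
-/

open scoped MatrixOrder

namespace Matrix

variable {n 𝕜 : Type*} [Fintype n] [DecidableEq n] [RCLike 𝕜]

lemma IsHermitian.trace_cfc {A : Matrix n n 𝕜} (hA : A.IsHermitian) (f : ℝ → ℝ) :
    (cfc f A).trace = ∑ i, (f (hA.eigenvalues i) : 𝕜) := by
  rw [hA.cfc_eq, IsHermitian.cfc, Unitary.conjStarAlgAut_apply, trace_mul_cycle,
    Unitary.coe_star_mul_self, one_mul, trace_diagonal]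
  rfl

lemma IsHermitian.star_eigenvectorUnitary_mul_mul_apply_self {A : Matrix n n 𝕜}
    (hA : A.IsHermitian) (i : n) :
    (star (hA.eigenvectorUnitary : Matrix n n 𝕜) * A * hA.eigenvectorUnitary) i i =
      hA.eigenvalues i := by
  have := congrFun (congrFun hA.conjStarAlgAut_star_eigenvectorUnitary i) i
  rw [Unitary.conjStarAlgAut_star_apply] at this
  simpa using this

/- In the eigenbasis of `P - N`, each eigenvalue is the difference of the nonnegative diagonal
entries of the conjugates of `P` and `N`. -/
lemma re_trace_abs_sub_le {P N : Matrix n n 𝕜} (hP : P.PosSemidef) (hN : N.PosSemidef) :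
    RCLike.re (CFC.abs (P - N)).trace ≤ RCLike.re P.trace + RCLike.re N.trace := by
  have hX : (P - N).IsHermitian := hP.1.sub hN.1
  set U : Matrix n n 𝕜 := ↑hX.eigenvectorUnitary
  have hconj : ∀ A : Matrix n n 𝕜, A.trace = (star U * A * U).trace := fun A => by
    rw [trace_mul_cycle, Unitary.mul_star_self_of_mem hX.eigenvectorUnitary.2, one_mul]
  have hdiag : ∀ i, |hX.eigenvalues i| ≤
      RCLike.re ((star U * P * U) i i) + RCLike.re ((star U * N * U) i i) := fun i => by
    have hPi := (hP.conjTranspose_mul_mul_same U).diag_nonneg (i := i)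
    have hNi := (hN.conjTranspose_mul_mul_same U).diag_nonneg (i := i)
    have heig := hX.star_eigenvectorUnitary_mul_mul_apply_self i
    rw [Matrix.mul_sub, Matrix.sub_mul, sub_apply] at heig
    rw [star_eq_conjTranspose] at heig ⊢
    have hre := congrArg RCLike.re heig
    rw [RCLike.ofReal_re, map_sub] at hre
    rw [← hre]
    exact (abs_sub _ _).trans (by
      rw [abs_of_nonneg (RCLike.nonneg_iff.mp hPi).1, abs_of_nonneg (RCLike.nonneg_iff.mp hNi).1])
  rw [CFC.abs_eq_cfc_norm _ hX.isSelfAdjoint, hX.trace_cfc, hconj P, hconj N]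
  simp only [map_sum, RCLike.ofReal_re, Real.norm_eq_abs, trace, diag]
  rw [← Finset.sum_add_distrib]
  exact Finset.sum_le_sum fun i _ => hdiag i

namespace PosSemidef

variable {A : Matrix n n 𝕜}

lemma spectrum_subset_Icc_re_trace (hA : A.PosSemidef) :
    spectrum ℝ A ⊆ Set.Icc 0 (RCLike.re A.trace) := by
  rintro x hx
  obtain ⟨i, rfl⟩ := hA.1.spectrum_real_eq_range_eigenvalues ▸ hx
  have hsum : RCLike.re A.trace = ∑ j, hA.1.eigenvalues j := by
    simp [hA.1.trace_eq_sum_eigenvalues]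
  exact ⟨hA.eigenvalues_nonneg i, hsum ▸ Finset.single_le_sum
    (fun j _ => hA.eigenvalues_nonneg j) (Finset.mem_univ i)⟩

lemma le_algebraMap_re_trace (hA : A.PosSemidef) :
    A ≤ algebraMap ℝ (Matrix n n 𝕜) (RCLike.re A.trace) :=
  le_algebraMap_of_spectrum_le fun _ hx => (hA.spectrum_subset_Icc_re_trace hx).2

lemma mul_self_le_re_trace_smul (hA : A.PosSemidef) : A * A ≤ RCLike.re A.trace • A := by
  calc A * A = cfc (fun x : ℝ => x * x) A := by rw [cfc_mul _ _ A, cfc_id' ℝ A]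
    _ ≤ cfc (fun x : ℝ => RCLike.re A.trace * x) A := cfc_mono fun x hx => by
        obtain ⟨h0, h1⟩ := hA.spectrum_subset_Icc_re_trace hx
        exact mul_le_mul_of_nonneg_right h1 h0
    _ = RCLike.re A.trace • A := by rw [cfc_const_mul _ _ A, cfc_id' ℝ A]

lemma mul_eq_zero_of_conjTranspose_mul_mul_eq_zero {k : Type*} [Fintype k] (hA : A.PosSemidef)
    {B : Matrix n k 𝕜} (h : Bᴴ * A * B = 0) : A * B = 0 := by
  have hs : IsSelfAdjoint (CFC.sqrt A) := (CFC.sqrt_nonneg A).isSelfAdjoint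
  have hsB : CFC.sqrt A * B = 0 := by
    rw [← conjTranspose_mul_self_eq_zero, conjTranspose_mul, ← star_eq_conjTranspose (CFC.sqrt A),
      hs.star_eq, Matrix.mul_assoc, ← Matrix.mul_assoc (CFC.sqrt A),
      CFC.sqrt_mul_sqrt_self A hA.nonneg, ← Matrix.mul_assoc, h]
  rw [← CFC.sqrt_mul_sqrt_self A hA.nonneg, Matrix.mul_assoc, hsB, Matrix.mul_zero]

end PosSemidef

end Matrix

section TraceNorm

variable {m : Type*} [Fintype m] [DecidableEq m]

lemma trNorm_eq_half_re_trace_abs (A : Matrix m m ℂ) :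
    trNorm A = 1 / 2 * (CFC.abs A).trace.re := by
  rw [CFC.abs, star_eq_conjTranspose, CFC.sqrt_eq_real_sqrt _
    (posSemidef_conjTranspose_mul_self A).nonneg, cfcₙ_eq_cfc,
    (posSemidef_conjTranspose_mul_self A).1.cfc_eq]
  rfl

lemma trNorm_sub_le {P N : Matrix m m ℂ} (hP : P.PosSemidef) (hN : N.PosSemidef) :
    trNorm (P - N) ≤ 1 / 2 * (P.trace.re + N.trace.re) := by
  rw [trNorm_eq_half_re_trace_abs]
  gcongr
  exact re_trace_abs_sub_le hP hN

lemma trNorm_map_le {n : Type*} [Fintype n] [DecidableEq n] (Λ : Matrix n n ℂ →ₗ[ℂ] Matrix m m ℂ)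
    (hpos : ∀ A, A.PosSemidef → (Λ A).PosSemidef) (htr : ∀ A, (Λ A).trace = A.trace)
    {X : Matrix n n ℂ} (hX : X.IsHermitian) : trNorm (Λ X) ≤ trNorm X :=
  calc trNorm (Λ X) = trNorm (Λ X⁺ - Λ X⁻) := by
        rw [← map_sub, CFC.posPart_sub_negPart X hX.isSelfAdjoint]
    _ ≤ 1 / 2 * ((Λ X⁺).trace.re + (Λ X⁻).trace.re) :=
        trNorm_sub_le (hpos _ (CFC.posPart_nonneg X).posSemidef)
          (hpos _ (CFC.negPart_nonneg X).posSemidef)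
    _ = trNorm X := by
        rw [htr, htr, ← Complex.add_re, ← trace_add, CFC.posPart_add_negPart X hX.isSelfAdjoint,
          trNorm_eq_half_re_trace_abs]

end TraceNorm

section PureProj

variable {m : Type*} [Fintype m]

lemma pureProj_posSemidef (χ : m → ℂ) : (pureProj χ).PosSemidef :=
  posSemidef_vecMulVec_self_star χ

lemma trace_pureProj (χ : m → ℂ) : (pureProj χ).trace = star χ ⬝ᵥ χ := by
  rw [pureProj, trace_vecMulVec, dotProduct_comm]

lemma pureProj_mulVec {ρ : Matrix m m ℂ} (hρ : ρ.IsHermitian) (v : m → ℂ) :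
    pureProj (ρ *ᵥ v) = ρ * pureProj v * ρ := by
  rw [pureProj, pureProj, vecMulVec_eq Unit, vecMulVec_eq Unit, replicateCol_mulVec,
    star_mulVec, replicateRow_vecMul, ← Matrix.mul_assoc, ← Matrix.mul_assoc, hρ.eq]

lemma pureProj_mulVec_le [DecidableEq m] {ρ : Matrix m m ℂ} (hρ : ρ.PosSemidef) (v : m → ℂ) :
    pureProj (ρ *ᵥ v) ≤ ((star v ⬝ᵥ v).re * ρ.trace.re) • ρ := by
  have hv : pureProj v ≤ algebraMap ℝ _ (star v ⬝ᵥ v).re := by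
    simpa [trace_pureProj] using (pureProj_posSemidef v).le_algebraMap_re_trace
  calc pureProj (ρ *ᵥ v) = ρ * pureProj v * ρ := pureProj_mulVec hρ.1 v
    _ ≤ ρ * algebraMap ℝ _ (star v ⬝ᵥ v).re * ρ := hρ.1.isSelfAdjoint.conjugate_le_conjugate hv
    _ = (star v ⬝ᵥ v).re • (ρ * ρ) := by
        rw [Algebra.algebraMap_eq_smul_one, Matrix.mul_smul, Matrix.mul_one, Matrix.smul_mul]
    _ ≤ (star v ⬝ᵥ v).re • (ρ.trace.re • ρ) := by
        gcongr
        · exact (Complex.nonneg_iff.mp (dotProduct_star_self_nonneg v)).1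
        · exact hρ.mul_self_le_re_trace_smul
    _ = _ := smul_smul _ _ _

end PureProj

section States

variable {m : Type*} [Fintype m] [DecidableEq m]

/- `σ` vanishes on the range of `1 - Q`, so `σ = Q σ Q ≤ Q`, and equal traces force equality. -/
lemma IsPureState.eq_of_le_smul {Q σ : Matrix m m ℂ} (hQ : IsPureState Q) (hσ : IsDensity σ)
    {c : ℝ} (h : σ ≤ c • Q) : σ = Q := by
  have hQsa : IsSelfAdjoint Q := hQ.1.1.1
  set R : Matrix m m ℂ := 1 - Q
  have hRsa : IsSelfAdjoint R := (IsSelfAdjoint.one _).sub hQsa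
  have hRQ : R * Q = 0 := by rw [Matrix.sub_mul, Matrix.one_mul, hQ.2, sub_self]
  have hRσR : R * σ * R = 0 := by
    refine le_antisymm ?_ (hRsa.conjugate_nonneg hσ.1.nonneg)
    calc R * σ * R ≤ R * (c • Q) * R := hRsa.conjugate_le_conjugate h
      _ = 0 := by rw [Matrix.mul_smul, hRQ, smul_zero, Matrix.zero_mul]
  have hσR : σ * R = 0 := hσ.1.mul_eq_zero_of_conjTranspose_mul_mul_eq_zero
    (by rwa [← star_eq_conjTranspose, hRsa.star_eq])
  have hσQ : σ * Q = σ := by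
    rwa [Matrix.mul_sub, Matrix.mul_one, sub_eq_zero, eq_comm] at hσR
  have hQσ : Q * σ = σ := by
    simpa only [star_mul, hQsa.star_eq, hσ.1.1.isSelfAdjoint.star_eq] using congrArg star hσQ
  have hσ_le_Q : σ ≤ Q :=
    calc σ = Q * σ * Q := by rw [Matrix.mul_assoc, hσQ, hQσ]
      _ ≤ Q * 1 * Q := by
        refine hQsa.conjugate_le_conjugate ?_
        simpa [hσ.2] using hσ.1.le_algebraMap_re_trace
      _ = Q := by rw [Matrix.mul_one, hQ.2]
  have htr : (Q - σ).trace = 0 := by rw [trace_sub, hQ.1.2, hσ.2, sub_self]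
  exact (sub_eq_zero.mp ((Matrix.le_iff.mp hσ_le_Q).trace_eq_zero_iff.mp htr)).symm

lemma IsDensity.exists_unit_inRange {ρ : Matrix m m ℂ} (hρ : IsDensity ρ) :
    ∃ χ, inRange ρ χ ∧ star χ ⬝ᵥ χ = 1 := by
  have hH := hρ.1.1
  have hsum : ∑ i, hH.eigenvalues i = 1 := by
    simpa [hρ.2, eq_comm] using congrArg Complex.re hH.trace_eq_sum_eigenvalues
  obtain ⟨i, -, hi⟩ := Finset.exists_ne_zero_of_sum_ne_zero (hsum ▸ one_ne_zero)
  set u := hH.eigenvectorBasis i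
  refine ⟨u, ⟨(hH.eigenvalues i)⁻¹ • u, ?_⟩, ?_⟩
  · rw [mulVec_smul, hH.mulVec_eigenvectorBasis, smul_smul, inv_mul_cancel₀ hi, one_smul]
  · rw [dotProduct_comm, ← EuclideanSpace.inner_eq_star_dotProduct, inner_self_eq_norm_sq_to_K,
      hH.eigenvectorBasis.orthonormal.1 i]
    simp

end States

namespace IsCPTP

variable {n m : Type*} [Fintype n] [DecidableEq n] [Fintype m]
  {Λ : Matrix n n ℂ →ₗ[ℂ] Matrix m m ℂ}

lemma posSemidef_map (hΛ : IsCPTP Λ) {A : Matrix n n ℂ} (hA : A.PosSemidef) :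
    (Λ A).PosSemidef := by
  obtain ⟨ι, s, K, hK, -⟩ := hΛ
  rw [hK]
  exact posSemidef_sum s fun i _ => hA.mul_mul_conjTranspose_same (K i)

lemma trace_map (hΛ : IsCPTP Λ) (A : Matrix n n ℂ) : (Λ A).trace = A.trace := by
  obtain ⟨ι, s, K, hK, hsum⟩ := hΛ
  rw [hK, trace_sum]
  simp_rw [trace_mul_cycle _ A, ← trace_sum, ← Finset.sum_mul, hsum, Matrix.one_mul]

lemma map_mono (hΛ : IsCPTP Λ) {A B : Matrix n n ℂ} (h : A ≤ B) : Λ A ≤ Λ B := by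
  rw [Matrix.le_iff, ← map_sub]
  exact hΛ.posSemidef_map h

lemma isDensity_map (hΛ : IsCPTP Λ) {ρ : Matrix n n ℂ} (hρ : IsDensity ρ) : IsDensity (Λ ρ) :=
  ⟨hΛ.posSemidef_map hρ.1, by rw [hΛ.trace_map, hρ.2]⟩

lemma map_pureProj_eq [DecidableEq m] (hΛ : IsCPTP Λ) {ρ : Matrix n n ℂ} (hρ : IsDensity ρ)
    {χ : n → ℂ} (hχ : inRange ρ χ) (hu : star χ ⬝ᵥ χ = 1) (hp : IsPureState (Λ ρ)) :
    Λ (pureProj χ) = Λ ρ := by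
  obtain ⟨v, rfl⟩ := hχ
  refine hp.eq_of_le_smul (hΛ.isDensity_map ⟨pureProj_posSemidef _, by rw [trace_pureProj, hu]⟩)
    (c := (star v ⬝ᵥ v).re * ρ.trace.re) ?_
  rw [← LinearMap.map_smul_of_tower]
  exact hΛ.map_mono (pureProj_mulVec_le hρ.1 v)

end IsCPTP

/-- for a CPTP map with pure outputs on `ρ, ρ'`, the trace distance of
the outputs is bounded by the worst-case distinguishability of the inputs. -/
theorem pure_output_trace_distance_le_wcd {n m : Type*} [Fintype n] [DecidableEq n]
    [Fintype m] [DecidableEq m]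
    (Λ : Matrix n n ℂ →ₗ[ℂ] Matrix m m ℂ) (hCPTP : IsCPTP Λ)
    (ρ ρ' : Matrix n n ℂ) (hρ : IsDensity ρ) (hρ' : IsDensity ρ')
    (hp : IsPureState (Λ ρ)) (hp' : IsPureState (Λ ρ')) :
    trNorm (Λ ρ - Λ ρ') ≤ wcd ρ ρ' := by
  obtain ⟨χ₀, hχ₀, hu₀⟩ := hρ.exists_unit_inRange
  obtain ⟨χ₀', hχ₀', hu₀'⟩ := hρ'.exists_unit_inRange
  refine le_csInf ⟨_, χ₀, χ₀', hχ₀, hχ₀', hu₀, hu₀', rfl⟩ ?_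
  rintro _ ⟨χ, χ', hχ, hχ', hu, hu', rfl⟩
  rw [← hCPTP.map_pureProj_eq hρ hχ hu hp, ← hCPTP.map_pureProj_eq hρ' hχ' hu' hp', ← map_sub]
  exact trNorm_map_le Λ (fun _ => hCPTP.posSemidef_map) hCPTP.trace_map
    ((pureProj_posSemidef χ).1.sub (pureProj_posSemidef χ').1)
end

section
/- All density operators in an essentially pure set have the same spectrum (with multiplicities). -/
open Matrix Kronecker BigOperators
open scoped ComplexOrder

/-!
Both `ρᵢ ⊗ ω` and `ρⱼ ⊗ ω` are unitarily similar to some `|φ⟩⟨φ| ⊗ σ_B`, and the spectrum of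
`|φ⟩⟨φ| ⊗ σ_B` (that of `σ_B` padded with zeros) does not depend on the unit vector `φ`; hence
`ρᵢ ⊗ ω` and `ρⱼ ⊗ ω` have the same spectrum. The spectrum of a tensor product of positive
semidefinite matrices is the multiset of products `λ μ` of their eigenvalues, and `ω ≠ 0`
can be cancelled from it: the largest eigenvalue of `ρ ⊗ ω` is `λ_max(ρ) λ_max(ω)`, which
recovers `λ_max(ρ)`; remove the corresponding copies of `λ_max(ρ) μ` and repeat.
-/

open Polynomial NNReal

namespace Multiset

lemma sup_mem_of_ne_zero {α : Type*} [LinearOrder α] [OrderBot α] {s : Multiset α}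
    (hs : s ≠ 0) : s.sup ∈ s := by
  obtain ⟨y, hy, hmax⟩ := s.exists_max_image id hs
  rwa [le_antisymm (sup_le.2 hmax) (le_sup hy)]

lemma map_prodMap_product {α β γ δ : Type*} (f : α → γ) (g : β → δ) (s : Multiset α)
    (t : Multiset β) : (s ×ˢ t).map (Prod.map f g) = s.map f ×ˢ t.map g := by
  induction s using Multiset.induction with
  | empty => simp
  | cons a s ih => simp [ih, map_map]

variable {α : Type*} [LinearOrderedCommGroupWithZero α]

lemma sup_map_mul_product (s t : Multiset α) :
    ((s ×ˢ t).map fun x => x.1 * x.2).sup = s.sup * t.sup := by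
  refine le_antisymm (sup_le.2 ?_) ?_
  · simp only [mem_map, mem_product, Prod.exists]
    rintro _ ⟨a, b, ⟨ha, hb⟩, rfl⟩
    exact mul_le_mul' (le_sup ha) (le_sup hb)
  rcases eq_or_ne s 0 with rfl | hs
  · simp [_root_.bot_eq_zero]
  rcases eq_or_ne t 0 with rfl | ht
  · simp [_root_.bot_eq_zero]
  have hmem : (s.sup, t.sup) ∈ s ×ˢ t :=
    mem_product.2 ⟨sup_mem_of_ne_zero hs, sup_mem_of_ne_zero ht⟩
  exact le_sup (mem_map_of_mem (fun x : α × α => x.1 * x.2) hmem)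

lemma eq_of_map_mul_product_eq {s s' t : Multiset α} (ht : ∃ c ∈ t, c ≠ 0)
    (h : (s ×ˢ t).map (fun x => x.1 * x.2) = (s' ×ˢ t).map fun x => x.1 * x.2) : s = s' := by
  classical
  obtain ⟨c, hc, hc0⟩ := ht
  have ht0 : t.sup ≠ 0 := ((zero_lt_iff.2 hc0).trans_le (le_sup hc)).ne'
  have hcard : card s = card s' := by
    have := congrArg card h
    simp only [card_map, card_product] at this
    exact Nat.eq_of_mul_eq_mul_right (card_pos_iff_exists_mem.2 ⟨c, hc⟩) this
  induction s using Multiset.strongInductionOn generalizing s' with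
  | ih s ih =>
  rcases eq_or_ne s 0 with rfl | hs
  · exact (card_eq_zero.1 (hcard ▸ card_zero)).symm
  have hs' : s' ≠ 0 := fun h0 => hs (card_eq_zero.1 (hcard.trans (h0 ▸ card_zero)))
  have hsup : s.sup = s'.sup :=
    mul_right_cancel₀ ht0 (by rw [← sup_map_mul_product, h, sup_map_mul_product])
  have hmem := sup_mem_of_ne_zero hs
  have hmem' : s.sup ∈ s' := hsup ▸ sup_mem_of_ne_zero hs'
  rw [← cons_erase hmem, ← cons_erase hmem', cons_product, cons_product, map_add, map_add] at h
  rw [← cons_erase hmem, ← cons_erase hmem'] at hcard ⊢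
  rw [ih _ (erase_lt.2 hmem) (add_left_cancel h) (by simpa using hcard)]

end Multiset

namespace Matrix

variable {m n : Type*} [Fintype m] [DecidableEq m] [Fintype n] [DecidableEq n]

lemma charpoly_eq_prod_roots {K : Type*} [Field K] [IsAlgClosed K] (A : Matrix n n K) :
    A.charpoly = (A.charpoly.roots.map (X - C ·)).prod :=
  (IsAlgClosed.splits _).eq_prod_roots_of_monic A.charpoly_monic

lemma charpoly_conj_unitary {R : Type*} [CommRing R] [StarRing R] {U : Matrix n n R}
    (hU : U ∈ unitaryGroup n R) (A : Matrix n n R) : (U * A * Uᴴ).charpoly = A.charpoly := by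
  rw [charpoly_mul_comm, ← mul_assoc, ← star_eq_conjTranspose, mem_unitaryGroup_iff'.1 hU,
    one_mul]

lemma charpoly_submatrix_equiv {R p : Type*} [CommRing R] [Fintype p] [DecidableEq p]
    (e : n ≃ p) (A : Matrix p p R) : (A.submatrix e e).charpoly = A.charpoly := by
  simpa using charpoly_reindex e.symm A

variable {𝕜 : Type*} [RCLike 𝕜]

lemma IsHermitian.charpoly_kronecker {A : Matrix m m 𝕜} {B : Matrix n n 𝕜}
    (hA : A.IsHermitian) (hB : B.IsHermitian) :
    (A ⊗ₖ B).charpoly =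
      ∏ x : m × n, (X - C ((hA.eigenvalues x.1 : 𝕜) * hB.eigenvalues x.2)) := by
  conv_lhs => rw [hA.spectral_theorem, hB.spectral_theorem]
  simp only [Unitary.conjStarAlgAut_apply]
  rw [mul_kronecker_mul, mul_kronecker_mul, charpoly_mul_comm, ← mul_assoc, ← mul_kronecker_mul,
    Unitary.coe_star_mul_self, Unitary.coe_star_mul_self, one_kronecker_one, one_mul,
    diagonal_kronecker_diagonal, charpoly_diagonal]
  rfl

lemma IsHermitian.roots_charpoly_kronecker {A : Matrix m m 𝕜} {B : Matrix n n 𝕜}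
    (hA : A.IsHermitian) (hB : B.IsHermitian) :
    (A ⊗ₖ B).charpoly.roots =
      (A.charpoly.roots ×ˢ B.charpoly.roots).map fun x => x.1 * x.2 := by
  rw [hA.charpoly_kronecker hB, roots_prod _ _ (Finset.prod_ne_zero_iff.2 fun _ _ =>
      X_sub_C_ne_zero _), hA.roots_charpoly_eq_eigenvalues, hB.roots_charpoly_eq_eigenvalues,
    ← Multiset.map_prodMap_product, Multiset.map_map, ← Finset.product_val,
    Finset.univ_product_univ]
  simp only [roots_X_sub_C, Multiset.bind_singleton]
  rfl

lemma IsHermitian.charpoly_kronecker_congr_left {A A' : Matrix m m ℂ} {B : Matrix n n ℂ}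
    (hA : A.IsHermitian) (hA' : A'.IsHermitian) (hB : B.IsHermitian)
    (h : A.charpoly = A'.charpoly) : (A ⊗ₖ B).charpoly = (A' ⊗ₖ B).charpoly := by
  rw [charpoly_eq_prod_roots (A ⊗ₖ B), charpoly_eq_prod_roots (A' ⊗ₖ B),
    hA.roots_charpoly_kronecker hB, hA'.roots_charpoly_kronecker hB, h]

namespace PosSemidef

noncomputable def eigenvalueMultiset {A : Matrix n n ℂ} (hA : A.PosSemidef) : Multiset ℝ≥0 :=
  Finset.univ.val.map fun i => (hA.1.eigenvalues i).toNNReal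

lemma roots_charpoly_eq_map_eigenvalueMultiset {A : Matrix n n ℂ} (hA : A.PosSemidef) :
    A.charpoly.roots = hA.eigenvalueMultiset.map (algebraMap ℝ≥0 ℂ) := by
  rw [hA.1.roots_charpoly_eq_eigenvalues, eigenvalueMultiset, Multiset.map_map]
  refine Multiset.map_congr rfl fun i _ => ?_
  exact congrArg ((↑) : ℝ → ℂ) (Real.coe_toNNReal _ (hA.eigenvalues_nonneg i)).symm

lemma exists_mem_eigenvalueMultiset_ne_zero {A : Matrix n n ℂ} (hA : A.PosSemidef)
    (hA0 : A ≠ 0) : ∃ c ∈ hA.eigenvalueMultiset, c ≠ 0 := by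
  obtain ⟨i, hi⟩ := Function.ne_iff.1 (mt hA.1.eigenvalues_eq_zero_iff.1 hA0)
  refine ⟨_, Multiset.mem_map_of_mem _ (Finset.mem_univ_val i), ?_⟩
  simpa [Real.toNNReal_eq_zero, (hA.eigenvalues_nonneg i).ge_iff_eq'] using hi

lemma charpoly_eq_of_charpoly_kronecker_eq {A A' : Matrix m m ℂ} {B : Matrix n n ℂ}
    (hA : A.PosSemidef) (hA' : A'.PosSemidef) (hB : B.PosSemidef) (hB0 : B ≠ 0)
    (h : (A ⊗ₖ B).charpoly = (A' ⊗ₖ B).charpoly) : A.charpoly = A'.charpoly := by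
  have hinj : Function.Injective (algebraMap ℝ≥0 ℂ) :=
    Complex.ofReal_injective.comp NNReal.coe_injective
  have hmul (s t : Multiset ℝ≥0) :
      (s.map (algebraMap ℝ≥0 ℂ) ×ˢ t.map (algebraMap ℝ≥0 ℂ)).map (fun x => x.1 * x.2) =
        ((s ×ˢ t).map fun x => x.1 * x.2).map (algebraMap ℝ≥0 ℂ) := by
    simp [← Multiset.map_prodMap_product, Multiset.map_map]
  have hroots := congrArg roots h
  rw [hA.1.roots_charpoly_kronecker hB.1, hA'.1.roots_charpoly_kronecker hB.1,
    hA.roots_charpoly_eq_map_eigenvalueMultiset, hA'.roots_charpoly_eq_map_eigenvalueMultiset,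
    hB.roots_charpoly_eq_map_eigenvalueMultiset, hmul, hmul] at hroots
  have hspec := Multiset.eq_of_map_mul_product_eq (hB.exists_mem_eigenvalueMultiset_ne_zero hB0)
    (Multiset.map_injective hinj hroots)
  rw [charpoly_eq_prod_roots A, charpoly_eq_prod_roots A',
    hA.roots_charpoly_eq_map_eigenvalueMultiset, hA'.roots_charpoly_eq_map_eigenvalueMultiset,
    hspec]

end PosSemidef

end Matrix

lemma posSemidef_pureProj {n : Type*} [Finite n] (φ : n → ℂ) : (pureProj φ).PosSemidef :=
  posSemidef_vecMulVec_self_star φ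

lemma charpoly_pureProj {n : Type*} [Fintype n] [DecidableEq n] {φ : n → ℂ}
    (hφ : star φ ⬝ᵥ φ = 1) :
    (pureProj φ).charpoly = X ^ Fintype.card n - X ^ (Fintype.card n - 1) := by
  rw [pureProj, charpoly_vecMulVec, dotProduct_comm, hφ, one_smul]

/-- all density operators in an essentially pure set have the same
spectrum with multiplicities (equal characteristic polynomials). -/
theorem essentially_pure_same_spectrum
    {n a p b : Type*} [Fintype n] [DecidableEq n] [Fintype a] [DecidableEq a]
    [Fintype p] [Fintype b]
    (M : Set (Matrix n n ℂ)) (hM : ∀ ρ ∈ M, IsDensity ρ)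
    (e : n × a ≃ p × b) (ω : Matrix a a ℂ) (σB : Matrix b b ℂ)
    (U : Matrix (n × a) (n × a) ℂ)
    (hω : IsDensity ω) (hσ : IsDensity σB)
    (hU : U ∈ Matrix.unitaryGroup (n × a) ℂ)
    (hEP : ∀ ρ ∈ M, ∃ φ : p → ℂ, star φ ⬝ᵥ φ = 1 ∧
      ρ ⊗ₖ ω = U * ((pureProj φ ⊗ₖ σB).submatrix e e) * Uᴴ) :
    ∀ ρi ∈ M, ∀ ρj ∈ M, ρi.charpoly = ρj.charpoly := by
  classical
  have hω0 : ω ≠ 0 := fun h => by simpa [h] using hω.2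
  intro ρi hρi ρj hρj
  obtain ⟨φi, hφi, hρφi⟩ := hEP ρi hρi
  obtain ⟨φj, hφj, hρφj⟩ := hEP ρj hρj
  have hpure : (pureProj φi ⊗ₖ σB).charpoly = (pureProj φj ⊗ₖ σB).charpoly :=
    (posSemidef_pureProj φi).1.charpoly_kronecker_congr_left (posSemidef_pureProj φj).1 hσ.1.1
      (by rw [charpoly_pureProj hφi, charpoly_pureProj hφj])
  refine (hM ρi hρi).1.charpoly_eq_of_charpoly_kronecker_eq (hM ρj hρj).1 hω.1 hω0 ?_
  rw [hρφi, hρφj, charpoly_conj_unitary hU, charpoly_conj_unitary hU,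
    charpoly_submatrix_equiv, charpoly_submatrix_equiv, hpure]
end
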